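/- arXiv:2301.08510 — 3 statements merged into one kernel-verified Lean document; each statement's English description precedes it below -/
import Mathlib

section
/- Let M ∈ ℂ^{p×m} and suppose there exist positive definite Hermitian matrices D_ℓ ∈ ℂ^{p×p} and D_r ∈ ℂ^{m×m} such that M D_r M^H ≺ D_ℓ. Then for every Δ ∈ ℂ^{m×p} with σ̄(Δ) ≤ 1 and Δ D_ℓ = D_r Δ, the matrix I − M Δ is invertible. -/
open Matrix
open scoped ComplexOrder

/-- The largest singular value of a complex matrix: the operator norm of the
induced linear map between Euclidean spaces. -/
noncomputable def sigmaMax {m n : Type*} [Fintype m] [Fintype n] [DecidableEq n]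
    (A : Matrix m n ℂ) : ℝ :=
  ‖LinearMap.toContinuousLinearMap (Matrix.toEuclideanLin A)‖

/-- If `X` commutes with `diagonal e`, it commutes with `diagonal e'` whenever
`e'` is constant on the level sets of `e`. -/
lemma aux_commute_diagonal {n : Type*} [Fintype n] [DecidableEq n]
    {e e' : n → ℂ} (hee : ∀ i j, e i = e j → e' i = e' j) {X : Matrix n n ℂ}
    (h : X * diagonal e = diagonal e * X) :
    X * diagonal e' = diagonal e' * X := by
  ext i j
  have h' := congrFun (congrFun h i) j
  rw [mul_diagonal, diagonal_mul] at h'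
  rw [mul_diagonal, diagonal_mul]
  rcases eq_or_ne (X i j) 0 with h0 | h0
  · simp [h0]
  · have hd : e j = e i := by
      have : X i j * e j = X i j * e i := by rw [h']; ring
      exact mul_left_cancel₀ h0 this
    rw [hee j i hd]
    ring

set_option maxHeartbeats 1600000 in
/-- Product of a positive semidefinite matrix with a commuting matrix `C ≤ 1`
(in the sense that `1 - C` is PSD), subtracted from the matrix, is PSD. -/
lemma aux_key {n : Type*} [Fintype n] [DecidableEq n] (Dr C : Matrix n n ℂ)
    (hDr : Dr.PosSemidef) (hC : ((1 : Matrix n n ℂ) - C).PosSemidef)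
    (hcomm : Dr * C = C * Dr) : (Dr - Dr * C).PosSemidef := by
  have hH := hDr.1
  set U : Matrix n n ℂ := (hH.eigenvectorUnitary : Matrix n n ℂ) with hUdef
  have hU1 : U * star U = 1 := mem_unitaryGroup_iff.mp hH.eigenvectorUnitary.2
  have hU2 : star U * U = 1 := mem_unitaryGroup_iff'.mp hH.eigenvectorUnitary.2
  have hU1' : ∀ t : Matrix n n ℂ, U * (star U * t) = t := fun t => by
    rw [← Matrix.mul_assoc, hU1, Matrix.one_mul]
  have hU2' : ∀ t : Matrix n n ℂ, star U * (U * t) = t := fun t => by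
    rw [← Matrix.mul_assoc, hU2, Matrix.one_mul]
  have keyU : ∀ P Q : Matrix n n ℂ, (U * P * star U) * (U * Q * star U) = U * (P * Q) * star U :=
    fun P Q => by simp only [Matrix.mul_assoc, hU2']
  have keyV : ∀ P Q : Matrix n n ℂ, (star U * P * U) * (star U * Q * U) = star U * (P * Q) * U :=
    fun P Q => by simp only [Matrix.mul_assoc, hU1']
  set d := hH.eigenvalues with hddef
  set Dd : Matrix n n ℂ := diagonal (RCLike.ofReal ∘ d) with hDddef
  have hDd : Dr = U * Dd * star U := hH.spectral_theorem
  set X : Matrix n n ℂ := star U * C * U with hXdef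
  have hDd' : Dd = star U * Dr * U := by
    rw [hDd]
    simp only [Matrix.mul_assoc, hU2', hU2, Matrix.mul_one]
  have hXDd : X * Dd = Dd * X := by
    calc X * Dd = (star U * C * U) * (star U * Dr * U) := by rw [← hDd']
    _ = star U * (C * Dr) * U := keyV _ _
    _ = star U * (Dr * C) * U := by rw [hcomm]
    _ = (star U * Dr * U) * (star U * C * U) := (keyV _ _).symm
    _ = Dd * X := by rw [← hDd']
  set Ds : Matrix n n ℂ := diagonal (fun i => ((Real.sqrt (d i) : ℝ) : ℂ)) with hDsdef
  have hXDs : X * Ds = Ds * X := by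
    refine aux_commute_diagonal (e := RCLike.ofReal ∘ d) ?_ hXDd
    intro i j hij
    have hdij : d i = d j := RCLike.ofReal_inj.mp hij
    simp [hdij]
  set S : Matrix n n ℂ := U * Ds * star U with hSdef
  have hDsH : Dsᴴ = Ds := by
    have hstar : (star fun i => ((Real.sqrt (d i) : ℝ) : ℂ)) =
        fun i => ((Real.sqrt (d i) : ℝ) : ℂ) := by
      funext i
      exact Complex.conj_ofReal _
    rw [hDsdef, diagonal_conjTranspose, hstar]
  have hSH : Sᴴ = S := by
    simp only [hSdef, Matrix.star_eq_conjTranspose, conjTranspose_mul,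
      conjTranspose_conjTranspose, hDsH, Matrix.mul_assoc]
  have hS2 : S * S = Dr := by
    rw [hSdef]
    rw [keyU]
    have hfun : (fun i => ((Real.sqrt (d i) : ℝ) : ℂ) * ((Real.sqrt (d i) : ℝ) : ℂ)) =
        RCLike.ofReal ∘ d := by
      funext i
      show ((Real.sqrt (d i) : ℝ) : ℂ) * ((Real.sqrt (d i) : ℝ) : ℂ) = RCLike.ofReal (d i)
      rw [← Complex.ofReal_mul, Real.mul_self_sqrt (hDr.eigenvalues_nonneg i)]
      rfl
    have hds : Ds * Ds = Dd := by
      rw [hDsdef, hDddef, diagonal_mul_diagonal, hfun]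
    rw [hds, ← hDd]
  have hC' : U * X * star U = C := by
    show U * (star U * C * U) * star U = C
    simp only [Matrix.mul_assoc, hU1', hU1, Matrix.mul_one]
  have hSC : S * C = C * S := by
    calc S * C = (U * Ds * star U) * (U * X * star U) := by rw [hC']
    _ = U * (Ds * X) * star U := keyU _ _
    _ = U * (X * Ds) * star U := by rw [hXDs]
    _ = (U * X * star U) * (U * Ds * star U) := (keyU _ _).symm
    _ = C * S := by rw [hC']
  have hfinal : Sᴴ * ((1 : Matrix n n ℂ) - C) * S = Dr - Dr * C := by
    rw [hSH, Matrix.mul_sub, Matrix.mul_one, Matrix.sub_mul]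
    rw [hS2]
    refine congrArg (fun t => Dr - t) ?_
    calc S * C * S = C * S * S := by rw [hSC]
    _ = C * (S * S) := by rw [Matrix.mul_assoc]
    _ = C * Dr := by rw [hS2]
    _ = Dr * C := hcomm.symm
  rw [← hfinal]
  exact hC.conjTranspose_mul_mul_same S

lemma aux_dot_shift {a b : Type*} [Fintype a] [Fintype b]
    (A : Matrix a b ℂ) (x : a → ℂ) (u : b → ℂ) :
    star x ⬝ᵥ A *ᵥ u = star (Aᴴ *ᵥ x) ⬝ᵥ u := by
  rw [dotProduct_mulVec, star_mulVec, conjTranspose_conjTranspose]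

section opnorm

open scoped Matrix.Norms.L2Operator

lemma aux_dot_self {k : ℕ} (v : Fin k → ℂ) :
    star v ⬝ᵥ v = ((‖(EuclideanSpace.equiv (Fin k) ℂ).symm v‖ ^ 2 : ℝ) : ℂ) := by
  rw [EuclideanSpace.norm_eq, Real.sq_sqrt (by positivity)]
  rw [Complex.ofReal_sum]
  simp only [dotProduct, Pi.star_apply]
  refine Finset.sum_congr rfl fun i _ => ?_
  have h1 : ((EuclideanSpace.equiv (Fin k) ℂ).symm v) i = v i := rfl
  rw [h1, show (star (v i) : ℂ) = (starRingEnd ℂ) (v i) from rfl,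
    ← Complex.normSq_eq_conj_mul_self, ← Complex.sq_norm]

lemma aux_psd_one_sub {p m : ℕ} (Δ : Matrix (Fin m) (Fin p) ℂ) (hΔ : sigmaMax Δ ≤ 1) :
    ((1 : Matrix (Fin m) (Fin m) ℂ) - Δ * Δᴴ).PosSemidef := by
  refine .of_dotProduct_mulVec_nonneg ?_ ?_
  · exact (isHermitian_one).sub (isHermitian_mul_conjTranspose_self Δ)
  · intro x
    rw [sub_mulVec, dotProduct_sub, one_mulVec]
    have hy : star x ⬝ᵥ (Δ * Δᴴ) *ᵥ x = star (Δᴴ *ᵥ x) ⬝ᵥ (Δᴴ *ᵥ x) := by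
      rw [← mulVec_mulVec, aux_dot_shift]
    rw [hy, aux_dot_self, aux_dot_self]
    have hnorm : ‖(EuclideanSpace.equiv (Fin p) ℂ).symm (Δᴴ *ᵥ x)‖ ≤
        ‖(EuclideanSpace.equiv (Fin m) ℂ).symm x‖ := by
      have hΔnorm : ‖Δ‖ = sigmaMax Δ := rfl
      calc ‖(EuclideanSpace.equiv (Fin p) ℂ).symm (Δᴴ *ᵥ x)‖
          ≤ ‖Δᴴ‖ * ‖(EuclideanSpace.equiv (Fin m) ℂ).symm x‖ :=
            Matrix.l2_opNorm_mulVec Δᴴ ((EuclideanSpace.equiv (Fin m) ℂ).symm x)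
      _ = ‖Δ‖ * ‖(EuclideanSpace.equiv (Fin m) ℂ).symm x‖ := by
            rw [Matrix.l2_opNorm_conjTranspose]
      _ ≤ 1 * ‖(EuclideanSpace.equiv (Fin m) ℂ).symm x‖ := by
            apply mul_le_mul_of_nonneg_right _ (norm_nonneg _)
            rw [hΔnorm]; exact hΔ
      _ = ‖(EuclideanSpace.equiv (Fin m) ℂ).symm x‖ := one_mul _
    rw [← Complex.ofReal_sub]
    have : (0 : ℝ) ≤ ‖(EuclideanSpace.equiv (Fin m) ℂ).symm x‖ ^ 2 -
        ‖(EuclideanSpace.equiv (Fin p) ℂ).symm (Δᴴ *ᵥ x)‖ ^ 2 := by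
      nlinarith [norm_nonneg ((EuclideanSpace.equiv (Fin p) ℂ).symm (Δᴴ *ᵥ x)),
        norm_nonneg ((EuclideanSpace.equiv (Fin m) ℂ).symm x)]
    exact_mod_cast this

end opnorm

theorem isUnit_one_sub_mul_of_scaled_contraction {p m : ℕ}
    (M : Matrix (Fin p) (Fin m) ℂ)
    (Dl : Matrix (Fin p) (Fin p) ℂ) (Dr : Matrix (Fin m) (Fin m) ℂ)
    (hDl : Dl.PosDef) (hDr : Dr.PosDef)
    (hMDM : (Dl - M * Dr * Mᴴ).PosDef)
    (Δ : Matrix (Fin m) (Fin p) ℂ) (hΔ : sigmaMax Δ ≤ 1)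
    (hcomm : Δ * Dl = Dr * Δ) :
    IsUnit (1 - M * Δ) := by
  rw [← Matrix.isUnit_conjTranspose]
  have hct : ((1 : Matrix (Fin p) (Fin p) ℂ) - M * Δ)ᴴ = 1 - Δᴴ * Mᴴ := by
    rw [conjTranspose_sub, conjTranspose_one, conjTranspose_mul]
  rw [hct, Matrix.isUnit_iff_isUnit_det, isUnit_iff_ne_zero]
  intro hdet
  obtain ⟨z, hz, hz0⟩ := Matrix.exists_mulVec_eq_zero_iff.mpr hdet
  set w : Fin m → ℂ := Mᴴ *ᵥ z with hwdef
  have hzz : z = Δᴴ *ᵥ w := by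
    have h := hz0
    rw [sub_mulVec, one_mulVec, sub_eq_zero] at h
    rw [h, ← mulVec_mulVec]
  -- h1 : star w Dr w < star z Dl z
  have h1 : star w ⬝ᵥ Dr *ᵥ w < star z ⬝ᵥ Dl *ᵥ z := by
    have h := hMDM.dotProduct_mulVec_pos hz
    rw [sub_mulVec, dotProduct_sub] at h
    have hrw : star z ⬝ᵥ (M * Dr * Mᴴ) *ᵥ z = star w ⬝ᵥ Dr *ᵥ w := by
      rw [Matrix.mul_assoc, ← mulVec_mulVec, aux_dot_shift, ← mulVec_mulVec]
    rw [hrw] at h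
    exact sub_pos.mp h
  -- commutation facts
  have hcomm' : Dl * Δᴴ = Δᴴ * Dr := by
    have h := congrArg conjTranspose hcomm
    simpa [conjTranspose_mul, hDl.1.eq, hDr.1.eq] using h
  have e1 : Δ * Dl * Δᴴ = Dr * (Δ * Δᴴ) := by
    rw [hcomm, Matrix.mul_assoc]
  have e2 : Dr * (Δ * Δᴴ) = (Δ * Δᴴ) * Dr := by
    calc Dr * (Δ * Δᴴ) = Dr * Δ * Δᴴ := by rw [Matrix.mul_assoc]
    _ = Δ * Dl * Δᴴ := by rw [← hcomm]
    _ = Δ * (Δᴴ * Dr) := by rw [Matrix.mul_assoc, hcomm']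
    _ = (Δ * Δᴴ) * Dr := by rw [Matrix.mul_assoc]
  have hpsd : (Dr - Δ * Dl * Δᴴ).PosSemidef := by
    rw [e1]
    exact aux_key Dr (Δ * Δᴴ) hDr.posSemidef (aux_psd_one_sub Δ hΔ) e2
  -- h2 : star z Dl z = star w (Δ Dl Δᴴ) w
  have h2 : star z ⬝ᵥ Dl *ᵥ z = star w ⬝ᵥ (Δ * Dl * Δᴴ) *ᵥ w := by
    calc star z ⬝ᵥ Dl *ᵥ z = star (Δᴴ *ᵥ w) ⬝ᵥ Dl *ᵥ (Δᴴ *ᵥ w) := by rw [← hzz]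
    _ = star w ⬝ᵥ Δ *ᵥ (Dl *ᵥ (Δᴴ *ᵥ w)) := (aux_dot_shift Δ w _).symm
    _ = star w ⬝ᵥ (Δ * Dl * Δᴴ) *ᵥ w := by rw [mulVec_mulVec, mulVec_mulVec]
  -- h3 : star w (Δ Dl Δᴴ) w ≤ star w Dr w
  have h3 : star w ⬝ᵥ (Δ * Dl * Δᴴ) *ᵥ w ≤ star w ⬝ᵥ Dr *ᵥ w := by
    have h := hpsd.dotProduct_mulVec_nonneg w
    rw [sub_mulVec, dotProduct_sub] at h
    exact sub_nonneg.mp h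
  exact lt_irrefl _ (lt_of_lt_of_le h1 (h2 ▸ h3 : star z ⬝ᵥ Dl *ᵥ z ≤ star w ⬝ᵥ Dr *ᵥ w))
end

section
/- Let N = [[N11, N12],[N21, 0]] be a 2×2 block complex matrix and Δ_b a complex matrix of compatible size such that I − N11 Δ_b is invertible. Define the lower LFT F(N, Δ_b) = N21 Δ_b (I − N11 Δ_b)^{-1} N12. If σ̄(N) < 1 and σ̄(Δ_b) ≤ 1, then σ̄(F(N, Δ_b)) < 1. -/
open Matrix
open scoped ComplexOrder

/-!
Close the loop: for an input `d`, let `u` solve `u = N₁₁ Δ u + N₁₂ d` (possible as `1 - N₁₁ Δ` is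
invertible) and put `w = Δ u`. Then `N` maps `(w, d)` to `(u, F(N, Δ) d)`, so
`‖u‖² + ‖F d‖² ≤ σ̄(N)² (‖w‖² + ‖d‖²) ≤ σ̄(N)² (‖u‖² + ‖d‖²)` because `σ̄(Δ) ≤ 1`.
As `σ̄(N) ≤ 1`, this leaves `‖F d‖ ≤ σ̄(N) ‖d‖`, i.e. `σ̄(F) ≤ σ̄(N) < 1`.
-/

namespace Matrix

variable {m n p q : Type*}

lemma sigmaMax_nonneg [Fintype m] [Fintype n] [DecidableEq n] (A : Matrix m n ℂ) :
    0 ≤ sigmaMax A :=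
  norm_nonneg _

lemma norm_toLp_mulVec_le [Fintype m] [Fintype n] [DecidableEq n] (A : Matrix m n ℂ)
    (x : n → ℂ) : ‖WithLp.toLp 2 (A *ᵥ x)‖ ≤ sigmaMax A * ‖WithLp.toLp 2 x‖ :=
  (LinearMap.toContinuousLinearMap (toEuclideanLin A)).le_opNorm (WithLp.toLp 2 x)

lemma sigmaMax_le_of_norm_toLp_mulVec_le [Fintype m] [Fintype n] [DecidableEq n]
    (A : Matrix m n ℂ) {c : ℝ} (hc : 0 ≤ c)
    (h : ∀ x, ‖WithLp.toLp 2 (A *ᵥ x)‖ ≤ c * ‖WithLp.toLp 2 x‖) : sigmaMax A ≤ c :=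
  ContinuousLinearMap.opNorm_le_bound _ hc fun x => h x.ofLp

lemma norm_sq_toLp_sumElim [Fintype m] [Fintype n] (x : m → ℂ) (y : n → ℂ) :
    ‖WithLp.toLp 2 (Sum.elim x y)‖ ^ 2 = ‖WithLp.toLp 2 x‖ ^ 2 + ‖WithLp.toLp 2 y‖ ^ 2 := by
  simp only [EuclideanSpace.norm_sq_eq, Fintype.sum_sum_type, Sum.elim_inl, Sum.elim_inr]

/-- The lower linear fractional transformation `F(N, Δ)` of `N = [[N₁₁, N₁₂], [N₂₁, 0]]`. -/
noncomputable def lowerLFT [Fintype m] [Fintype n] [DecidableEq m] (N₁₁ : Matrix m n ℂ)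
    (N₁₂ : Matrix m q ℂ) (N₂₁ : Matrix p n ℂ) (Δ : Matrix n m ℂ) : Matrix p q ℂ :=
  N₂₁ * Δ * (1 - N₁₁ * Δ)⁻¹ * N₁₂

lemma exists_fromBlocks_mulVec_loop [Fintype m] [Fintype n] [Fintype q] [DecidableEq m]
    {N₁₁ : Matrix m n ℂ} {Δ : Matrix n m ℂ} (hinv : IsUnit (1 - N₁₁ * Δ))
    (N₁₂ : Matrix m q ℂ) (N₂₁ : Matrix p n ℂ) (d : q → ℂ) :
    ∃ u : m → ℂ, fromBlocks N₁₁ N₁₂ N₂₁ 0 *ᵥ Sum.elim (Δ *ᵥ u) d =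
      Sum.elim u (lowerLFT N₁₁ N₁₂ N₂₁ Δ *ᵥ d) := by
  refine ⟨(1 - N₁₁ * Δ)⁻¹ *ᵥ N₁₂ *ᵥ d, ?_⟩
  have hsolve : (1 - N₁₁ * Δ) *ᵥ (1 - N₁₁ * Δ)⁻¹ *ᵥ N₁₂ *ᵥ d = N₁₂ *ᵥ d := by
    rw [mulVec_mulVec, mul_nonsing_inv _ ((isUnit_iff_isUnit_det _).mp hinv), one_mulVec]
  rw [fromBlocks_mulVec]
  simp only [Sum.elim_comp_inl, Sum.elim_comp_inr, zero_mulVec, add_zero, lowerLFT]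
  congr 1
  · rw [sub_mulVec, one_mulVec, ← mulVec_mulVec] at hsolve
    exact (sub_eq_iff_eq_add'.mp hsolve).symm
  · simp only [mulVec_mulVec, Matrix.mul_assoc]

lemma sigmaMax_lowerLFT_le [Fintype m] [Fintype n] [Fintype p] [Fintype q] [DecidableEq m]
    [DecidableEq n] [DecidableEq q] {N₁₁ : Matrix m n ℂ} {N₁₂ : Matrix m q ℂ} {N₂₁ : Matrix p n ℂ}
    {Δ : Matrix n m ℂ} (hinv : IsUnit (1 - N₁₁ * Δ))
    (hN : sigmaMax (fromBlocks N₁₁ N₁₂ N₂₁ (0 : Matrix p q ℂ)) ≤ 1) (hΔ : sigmaMax Δ ≤ 1) :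
    sigmaMax (lowerLFT N₁₁ N₁₂ N₂₁ Δ) ≤ sigmaMax (fromBlocks N₁₁ N₁₂ N₂₁ (0 : Matrix p q ℂ)) := by
  set s := sigmaMax (fromBlocks N₁₁ N₁₂ N₂₁ (0 : Matrix p q ℂ))
  have hs : 0 ≤ s := sigmaMax_nonneg _
  refine sigmaMax_le_of_norm_toLp_mulVec_le _ hs fun d => ?_
  obtain ⟨u, hloop⟩ := exists_fromBlocks_mulVec_loop hinv N₁₂ N₂₁ d
  have hblock := norm_toLp_mulVec_le (fromBlocks N₁₁ N₁₂ N₂₁ 0) (Sum.elim (Δ *ᵥ u) d)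
  rw [hloop] at hblock
  have hblock_sq := pow_le_pow_left₀ (norm_nonneg _) hblock 2
  rw [mul_pow, norm_sq_toLp_sumElim, norm_sq_toLp_sumElim] at hblock_sq
  have hw : ‖WithLp.toLp 2 (Δ *ᵥ u)‖ ^ 2 ≤ ‖WithLp.toLp 2 u‖ ^ 2 :=
    pow_le_pow_left₀ (norm_nonneg _)
      ((norm_toLp_mulVec_le Δ u).trans (mul_le_of_le_one_left (norm_nonneg _) hΔ)) 2
  have hs_sq : s ^ 2 ≤ 1 := pow_le_one₀ hs hN
  rw [← pow_le_pow_iff_left₀ (norm_nonneg _) (by positivity) two_ne_zero, mul_pow]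
  nlinarith [mul_le_mul_of_nonneg_left hw (sq_nonneg s), sq_nonneg ‖WithLp.toLp 2 u‖]

end Matrix

theorem lft_sigmaMax_lt_one {mb pb mc pc : ℕ}
    (N11 : Matrix (Fin mb) (Fin pb) ℂ) (N12 : Matrix (Fin mb) (Fin mc) ℂ)
    (N21 : Matrix (Fin pc) (Fin pb) ℂ) (Δb : Matrix (Fin pb) (Fin mb) ℂ)
    (hinv : IsUnit (1 - N11 * Δb))
    (hN : sigmaMax (Matrix.fromBlocks N11 N12 N21 (0 : Matrix (Fin pc) (Fin mc) ℂ)) < 1)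
    (hΔ : sigmaMax Δb ≤ 1) :
    sigmaMax (N21 * Δb * (1 - N11 * Δb)⁻¹ * N12) < 1 :=
  (sigmaMax_lowerLFT_le hinv hN.le hΔ).trans_lt hN
end

section
/- Let D ∈ ℂ^{n×n} be invertible and M ∈ ℂ^{n×n}. For any Δ ∈ ℂ^{n×n} commuting with D (DΔ = ΔD), det(I − MΔ) = det(I − (D M D^{-1}) Δ). Consequently, if σ̄(D M D^{-1}) < 1 then I − MΔ is invertible for all such Δ with σ̄(Δ) ≤ 1. -/
open Matrix
open scoped ComplexOrder

lemma sigmaMax_eq_norm_CLM {n : ℕ} (A : Matrix (Fin n) (Fin n) ℂ) :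
    sigmaMax A = ‖Matrix.toEuclideanCLM (𝕜 := ℂ) A‖ := by
  unfold sigmaMax
  congr 1

theorem d_scaling_upper_bound {n : ℕ} (D M : Matrix (Fin n) (Fin n) ℂ)
    (hD : IsUnit D) :
    (∀ Δ : Matrix (Fin n) (Fin n) ℂ, D * Δ = Δ * D →
        (1 - M * Δ).det = (1 - (D * M * D⁻¹) * Δ).det) ∧
      (sigmaMax (D * M * D⁻¹) < 1 →
        ∀ Δ : Matrix (Fin n) (Fin n) ℂ, D * Δ = Δ * D → sigmaMax Δ ≤ 1 →
          IsUnit (1 - M * Δ)) := by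
  have hDdet : IsUnit D.det := (Matrix.isUnit_iff_isUnit_det D).mp hD
  have hDinv : D * D⁻¹ = 1 := Matrix.mul_nonsing_inv D hDdet
  have hinvD : D⁻¹ * D = 1 := Matrix.nonsing_inv_mul D hDdet
  have key : ∀ Δ : Matrix (Fin n) (Fin n) ℂ, D * Δ = Δ * D →
      (1 - M * Δ).det = (1 - (D * M * D⁻¹) * Δ).det := by
    intro Δ hcomm
    have h1 : 1 - (D * M * D⁻¹) * Δ = D * (1 - M * Δ) * D⁻¹ := by
      have h2 : D⁻¹ * Δ = Δ * D⁻¹ := by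
        calc D⁻¹ * Δ = D⁻¹ * (Δ * D) * D⁻¹ := by
              rw [Matrix.mul_assoc, Matrix.mul_assoc, hDinv, Matrix.mul_one]
          _ = D⁻¹ * (D * Δ) * D⁻¹ := by rw [hcomm]
          _ = Δ * D⁻¹ := by rw [← Matrix.mul_assoc, hinvD, Matrix.one_mul]
      rw [Matrix.mul_sub, Matrix.sub_mul, Matrix.mul_one, hDinv]
      congr 1
      rw [Matrix.mul_assoc (D * M) D⁻¹ Δ, h2]
      simp [Matrix.mul_assoc]
    rw [h1, Matrix.det_mul, Matrix.det_mul, mul_comm, ← mul_assoc, ← Matrix.det_mul,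
      hinvD, Matrix.det_one, one_mul]
  refine ⟨key, ?_⟩
  intro hσ Δ hcomm hΔ
  set A := D * M * D⁻¹
  have hnorm : ‖Matrix.toEuclideanCLM (𝕜 := ℂ) (A * Δ)‖ < 1 := by
    rw [_root_.map_mul]
    calc ‖Matrix.toEuclideanCLM (𝕜 := ℂ) A * Matrix.toEuclideanCLM (𝕜 := ℂ) Δ‖
        ≤ ‖Matrix.toEuclideanCLM (𝕜 := ℂ) A‖ * ‖Matrix.toEuclideanCLM (𝕜 := ℂ) Δ‖ :=
          norm_mul_le _ _
      _ < 1 := by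
          rw [← sigmaMax_eq_norm_CLM, ← sigmaMax_eq_norm_CLM]
          have h0 : 0 ≤ sigmaMax A := norm_nonneg _
          nlinarith [norm_nonneg (LinearMap.toContinuousLinearMap (Matrix.toEuclideanLin Δ))]
  have hunitCLM : IsUnit (1 - Matrix.toEuclideanCLM (𝕜 := ℂ) (A * Δ)) :=
    (Units.oneSub _ hnorm).isUnit
  have hunit : IsUnit (1 - A * Δ) := by
    rw [← _root_.map_one (Matrix.toEuclideanCLM (𝕜 := ℂ)), ← _root_.map_sub] at hunitCLM
    exact (isUnit_map_iff (Matrix.toEuclideanCLM (𝕜 := ℂ)) _).mp hunitCLM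
  rw [Matrix.isUnit_iff_isUnit_det, isUnit_iff_ne_zero, key Δ hcomm]
  rw [Matrix.isUnit_iff_isUnit_det, isUnit_iff_ne_zero] at hunit
  exact hunit
end
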